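/- Fix μ, ρ > 0. For a positive integer m₀ put α = e^{−1/m₀}, β = e^{−ρ/m₀}, and define Δ_U(m₀) = (2ρm₀+4m₀+ρ+1)/(2μm₀(1+ρ)) + (1+β)/(2μm₀(1+ρ)(1−β)) + ρ(8m₀³+18m₀²+13m₀+3)/(12μm₀³(1+ρ)), Δ_M(m₀) = (2+ρ)/(μ(1+ρ)) + ρ(1+α)/(2μm₀(1+ρ)(1−α)) + (1+β)/(2μm₀(1+ρ)(1−β)), and Δ_D(m₀) = (4+3ρ)/(2μ(1+ρ)) + (1+β)/(2μm₀(1+ρ)(1−β)). Then there exists a positive integer m₀* such that for every positive integer m₀: if m₀ > m₀* then Δ_D(m₀) < Δ_U(m₀) < Δ_M(m₀), and if m₀ ≤ m₀* then Δ_D(m₀) < Δ_M(m₀) ≤ Δ_U(m₀). -/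

import Mathlib

/-!
All three ages share the term in `β`, so only explicit quantities need comparing:
`2μ(1+ρ)(Δ_M - Δ_D) = ρ(q - 1)` and `2μ(1+ρ)(Δ_U - Δ_D) = E(m₀)`, where
`q = (1 + α)/(m₀(1 - α)) = 2x coth x` with `x = 1/(2m₀)` and
`E(m) = ρ/3 + (4ρ+1)/m + 13ρ/(6m²) + ρ/(2m³)`.
The bounds `1 < x coth x < 1 + x²/3` (both by monotonicity from `x = 0`) give
`2 < q < 2 + 1/(6m₀²)`. Hence `Δ_D < Δ_M` (and `Δ_D < Δ_U` as `E > 0`), while the gap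
`ρ(q - 1) - E`, which has the sign of `Δ_M - Δ_U`, is negative at `m₀ = 1`, increases strictly
along the integers (from `m` to `m + 1`, `E` drops by more than `ρ/(6m²)`), and is at least
`ρ - E(m₀) → 2ρ/3 > 0`.
The threshold `m₀*` is the last integer at which the gap is `≤ 0`.
-/

open Real

/-- Approximate average AuD of the M/U/1/1-D bufferless system. -/
noncomputable def ΔU (mu rho m₀ : ℝ) : ℝ :=
  (2 * rho * m₀ + 4 * m₀ + rho + 1) / (2 * mu * m₀ * (1 + rho))
    + (1 + Real.exp (-rho / m₀)) / (2 * mu * m₀ * (1 + rho) * (1 - Real.exp (-rho / m₀)))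
    + rho * (8 * m₀ ^ 3 + 18 * m₀ ^ 2 + 13 * m₀ + 3) / (12 * mu * m₀ ^ 3 * (1 + rho))

/-- Approximate average AuD of the M/M/1/1-D bufferless system. -/
noncomputable def ΔM (mu rho m₀ : ℝ) : ℝ :=
  (2 + rho) / (mu * (1 + rho))
    + rho * (1 + Real.exp (-1 / m₀)) / (2 * mu * m₀ * (1 + rho) * (1 - Real.exp (-1 / m₀)))
    + (1 + Real.exp (-rho / m₀)) / (2 * mu * m₀ * (1 + rho) * (1 - Real.exp (-rho / m₀)))

/-- Approximate average AuD of the M/D/1/1-D bufferless system. -/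
noncomputable def ΔD (mu rho m₀ : ℝ) : ℝ :=
  (4 + 3 * rho) / (2 * mu * (1 + rho))
    + (1 + Real.exp (-rho / m₀)) / (2 * mu * m₀ * (1 + rho) * (1 - Real.exp (-rho / m₀)))

open Filter Topology

lemma pos_of_hasDerivAt_pos {f f' : ℝ → ℝ} (hf : ∀ y, HasDerivAt f (f' y) y) (h0 : f 0 = 0)
    (hf' : ∀ y, 0 < y → 0 < f' y) {x : ℝ} (hx : 0 < x) : 0 < f x := by
  obtain ⟨c, hc, hslope⟩ := exists_hasDerivAt_eq_slope f f' hx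
    (fun y _ => (hf y).continuousAt.continuousWithinAt) (fun y _ => hf y)
  rw [h0, sub_zero, sub_zero, eq_div_iff hx.ne'] at hslope
  rw [← hslope]
  exact mul_pos (hf' c hc.1) hx

lemma Nat.find_le_iff_of_monotone {p : ℕ → Prop} [DecidablePred p] (hp : Monotone p)
    (h : ∃ n, p n) (m : ℕ) : Nat.find h ≤ m ↔ p m := by
  rw [Nat.find_le_iff]
  exact ⟨fun ⟨k, hk, hpk⟩ => hp hk hpk, fun hm => ⟨m, le_rfl, hm⟩⟩

lemma sinh_lt_mul_cosh {x : ℝ} (hx : 0 < x) : sinh x < x * cosh x := by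
  have hderiv (y : ℝ) : HasDerivAt (fun y => y * cosh y - sinh y) (y * sinh y) y :=
    (((hasDerivAt_id' y).mul (hasDerivAt_cosh y)).sub (hasDerivAt_sinh y)).congr_deriv (by ring)
  have := pos_of_hasDerivAt_pos hderiv (by simp) (fun y hy => mul_pos hy (sinh_pos_iff.2 hy)) hx
  linarith

lemma mul_cosh_lt_mul_sinh {x : ℝ} (hx : 0 < x) : 3 * x * cosh x < (3 + x ^ 2) * sinh x := by
  have hderiv (y : ℝ) : HasDerivAt (fun y => (3 + y ^ 2) * sinh y - 3 * y * cosh y)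
      (y * (y * cosh y - sinh y)) y :=
    ((((hasDerivAt_pow 2 y).const_add 3).mul (hasDerivAt_sinh y)).sub
      (((hasDerivAt_id' y).const_mul 3).mul (hasDerivAt_cosh y))).congr_deriv (by ring)
  have := pos_of_hasDerivAt_pos hderiv (by simp)
    (fun y hy => mul_pos hy (sub_pos.2 (sinh_lt_mul_cosh hy))) hx
  linarith

noncomputable def cothRatio (m : ℝ) : ℝ := (1 + exp (-1 / m)) / (m * (1 - exp (-1 / m)))

lemma cothRatio_inv_two_mul {x : ℝ} (hx : 0 < x) :
    cothRatio (2 * x)⁻¹ = 2 * x * cosh x / sinh x := by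
  have hexp : exp (-1 / (2 * x)⁻¹) = (exp x ^ 2)⁻¹ := by
    rw [← exp_nat_mul, ← exp_neg]
    congr 1
    field_simp
    ring
  have hexp_sq : 1 - (exp x ^ 2)⁻¹ ≠ 0 := by
    have := inv_lt_one_of_one_lt₀ (one_lt_pow₀ (one_lt_exp_iff.2 hx) two_ne_zero)
    linarith
  have hsinh : exp x - (exp x)⁻¹ ≠ 0 := by
    have := inv_lt_one_of_one_lt₀ (one_lt_exp_iff.2 hx)
    linarith [one_lt_exp_iff.2 hx]
  rw [cothRatio, hexp, sinh_eq, cosh_eq, exp_neg]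
  field_simp

lemma cothRatio_mem_Ioo {m : ℝ} (hm : 0 < m) :
    2 < cothRatio m ∧ cothRatio m < 2 + 1 / (6 * m ^ 2) := by
  obtain ⟨x, hx, rfl⟩ : ∃ x, 0 < x ∧ m = (2 * x)⁻¹ := ⟨(2 * m)⁻¹, by positivity, by field_simp⟩
  have hsinh : 0 < sinh x := sinh_pos_iff.2 hx
  have hbound : 2 + 1 / (6 * ((2 * x)⁻¹) ^ 2) = 2 + 2 * x ^ 2 / 3 := by
    field_simp
    ring
  rw [cothRatio_inv_two_mul hx, hbound, lt_div_iff₀ hsinh, div_lt_iff₀ hsinh]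
  exact ⟨by linarith [sinh_lt_mul_cosh hx], by linarith [mul_cosh_lt_mul_sinh hx]⟩

noncomputable def excessU (rho m : ℝ) : ℝ :=
  rho / 3 + (4 * rho + 1) / m + 13 * rho / (6 * m ^ 2) + rho / (2 * m ^ 3)

noncomputable def gapMU (rho m : ℝ) : ℝ := rho * (cothRatio m - 1) - excessU rho m

section Comparison

variable {mu rho m : ℝ}

lemma ΔM_sub_ΔD (hmu : mu ≠ 0) (hrho : 1 + rho ≠ 0) (hm : m ≠ 0) :
    ΔM mu rho m - ΔD mu rho m = rho * (cothRatio m - 1) / (2 * mu * (1 + rho)) := by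
  unfold ΔM ΔD cothRatio
  field_simp
  ring

lemma ΔU_sub_ΔD (hmu : mu ≠ 0) (hrho : 1 + rho ≠ 0) (hm : m ≠ 0) :
    ΔU mu rho m - ΔD mu rho m = excessU rho m / (2 * mu * (1 + rho)) := by
  unfold ΔU ΔD excessU
  field_simp
  ring

lemma ΔD_lt_ΔM (hmu : 0 < mu) (hrho : 0 < rho) (hm : 0 < m) : ΔD mu rho m < ΔM mu rho m := by
  have hcoth : 0 < cothRatio m - 1 := by linarith [(cothRatio_mem_Ioo hm).1]
  rw [← sub_pos, ΔM_sub_ΔD hmu.ne' (by positivity) hm.ne']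
  positivity

lemma ΔD_lt_ΔU (hmu : 0 < mu) (hrho : 0 ≤ rho) (hm : 0 < m) : ΔD mu rho m < ΔU mu rho m := by
  rw [← sub_pos, ΔU_sub_ΔD hmu.ne' (by positivity) hm.ne', excessU]
  positivity

lemma ΔU_lt_ΔM_iff (hmu : 0 < mu) (hrho : 0 ≤ rho) (hm : m ≠ 0) :
    ΔU mu rho m < ΔM mu rho m ↔ 0 < gapMU rho m := by
  have hsub : ΔM mu rho m - ΔU mu rho m = gapMU rho m / (2 * mu * (1 + rho)) := by
    rw [← sub_sub_sub_cancel_right _ _ (ΔD mu rho m), ΔM_sub_ΔD hmu.ne' (by positivity) hm,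
      ΔU_sub_ΔD hmu.ne' (by positivity) hm, gapMU, sub_div]
  rw [← sub_pos, hsub]
  exact div_pos_iff_of_pos_right (by positivity)

end Comparison

section Gap

variable {rho m : ℝ}

lemma sub_excessU_le_gapMU (hrho : 0 ≤ rho) (hm : 0 < m) : rho - excessU rho m ≤ gapMU rho m := by
  have := mul_le_mul_of_nonneg_left (cothRatio_mem_Ioo hm).1.le hrho
  rw [gapMU]
  linarith

lemma gapMU_le (hrho : 0 ≤ rho) (hm : 0 < m) :
    gapMU rho m ≤ rho + rho / (6 * m ^ 2) - excessU rho m := by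
  have := mul_le_mul_of_nonneg_left (cothRatio_mem_Ioo hm).2.le hrho
  rw [mul_add, mul_one_div] at this
  rw [gapMU]
  linarith

lemma gapMU_one_neg (hrho : 0 ≤ rho) : gapMU rho 1 < 0 := by
  have := gapMU_le hrho one_pos
  rw [excessU] at this
  norm_num at this
  linarith

lemma excessU_add_one_add_lt (hrho : 0 ≤ rho) (hm : 1 ≤ m) :
    excessU rho (m + 1) + rho / (6 * m ^ 2) < excessU rho m := by
  have hm0 : 0 < m := by linarith
  have hlinear : (4 * rho + 1) / (m + 1) + rho / (6 * m ^ 2) < (4 * rho + 1) / m := by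
    rw [div_add_div _ _ (by positivity) (by positivity), div_lt_div_iff₀ (by positivity) hm0]
    nlinarith [mul_pos hm0 hm0, mul_nonneg hrho (mul_pos hm0 hm0).le]
  have hsq : 13 * rho / (6 * (m + 1) ^ 2) ≤ 13 * rho / (6 * m ^ 2) := by gcongr; linarith
  have hcube : rho / (2 * (m + 1) ^ 3) ≤ rho / (2 * m ^ 3) := by gcongr; linarith
  rw [excessU, excessU]
  linarith

lemma gapMU_lt_gapMU_add_one (hrho : 0 ≤ rho) (hm : 1 ≤ m) : gapMU rho m < gapMU rho (m + 1) := by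
  linarith [gapMU_le hrho (by linarith : 0 < m), sub_excessU_le_gapMU hrho (by linarith : 0 < m + 1),
    excessU_add_one_add_lt hrho hm]

lemma tendsto_excessU : Tendsto (fun n : ℕ => excessU rho n) atTop (𝓝 (rho / 3)) := by
  have hinv := tendsto_inv_atTop_nhds_zero_nat (𝕜 := ℝ)
  have := ((((hinv.const_mul (4 * rho + 1)).add ((hinv.pow 2).const_mul (13 * rho / 6))).add
    ((hinv.pow 3).const_mul (rho / 2))).const_add (rho / 3))
  simp only [mul_zero, add_zero, ne_eq, OfNat.ofNat_ne_zero, not_false_eq_true, zero_pow] at this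
  refine this.congr fun n => ?_
  rw [excessU]
  ring

lemma eventually_gapMU_pos (hrho : 0 < rho) : ∀ᶠ n : ℕ in atTop, 0 < gapMU rho n := by
  filter_upwards [tendsto_excessU.eventually (gt_mem_nhds (by linarith : rho / 3 < rho)),
    eventually_gt_atTop 0] with n hexcess hn
  linarith [sub_excessU_le_gapMU hrho.le (Nat.cast_pos.2 hn)]

end Gap

/-- There exists a positive integer threshold `m₀*` such that for every positive integer `m₀`:
if `m₀ > m₀*` then `Δ_D(m₀) < Δ_U(m₀) < Δ_M(m₀)`, and if `m₀ ≤ m₀*` then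
`Δ_D(m₀) < Δ_M(m₀) ≤ Δ_U(m₀)`. -/
theorem stmt_14 (mu rho : ℝ) (hmu : 0 < mu) (hrho : 0 < rho) :
    ∃ m₀star : ℕ, 0 < m₀star ∧ ∀ m₀ : ℕ, 0 < m₀ →
      ((m₀star < m₀ →
          ΔD mu rho (m₀ : ℝ) < ΔU mu rho (m₀ : ℝ) ∧ ΔU mu rho (m₀ : ℝ) < ΔM mu rho (m₀ : ℝ)) ∧
       (m₀ ≤ m₀star →
          ΔD mu rho (m₀ : ℝ) < ΔM mu rho (m₀ : ℝ) ∧ ΔM mu rho (m₀ : ℝ) ≤ ΔU mu rho (m₀ : ℝ))) := by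
  classical
  set p : ℕ → Prop := fun k => 0 < gapMU rho ((k + 1 : ℕ) : ℝ)
  have hp : Monotone p := monotone_nat_of_le_succ fun k hk => hk.trans <| by
    push_cast
    exact gapMU_lt_gapMU_add_one hrho.le (le_add_of_nonneg_left k.cast_nonneg)
  have hex : ∃ k, p k := ((tendsto_add_atTop_nat 1).eventually (eventually_gapMU_pos hrho)).exists
  refine ⟨Nat.find hex, Nat.pos_of_ne_zero fun hzero => ?_, fun m hm => ?_⟩
  · have := Nat.find_spec hex
    rw [hzero] at this
    exact (gapMU_one_neg hrho.le).not_gt (by simpa [p] using this)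
  obtain ⟨k, rfl⟩ := Nat.exists_eq_add_one_of_ne_zero hm.ne'
  have hk := Nat.find_le_iff_of_monotone hp hex k
  have hmR : (0 : ℝ) < (k + 1 : ℕ) := by positivity
  refine ⟨fun hlt => ⟨ΔD_lt_ΔU hmu hrho.le hmR, ?_⟩, fun hle => ⟨ΔD_lt_ΔM hmu hrho hmR, ?_⟩⟩
  · exact (ΔU_lt_ΔM_iff hmu hrho.le hmR.ne').2 (hk.1 (by omega))
  · refine not_lt.1 fun hUM => ?_
    have := hk.2 ((ΔU_lt_ΔM_iff hmu hrho.le hmR.ne').1 hUM)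
    omega
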